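/- arXiv:math/9911053 — 2 statements merged into one kernel-verified Lean document; each statement's English description precedes it below -/
import Mathlib

section
/- Let H, H₁, H₂ be complex Hilbert spaces and P : H → H₁, T : H → H₂ bounded linear operators. Then the column operator (P, T) : H → H₁ ⊕ H₂, x ↦ (Px, Tx), is Fredholm if and only if the restriction P|_{ker T} : ker T → H₁ is Fredholm and the range of T has finite codimension in H₂. -/
open Submodule ContinuousLinearMap

section Aux

variable {H H₁ H₂ : Type*}
    [NormedAddCommGroup H] [InnerProductSpace ℂ H] [CompleteSpace H]
    [NormedAddCommGroup H₁] [InnerProductSpace ℂ H₁] [CompleteSpace H₁]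
    [NormedAddCommGroup H₂] [InnerProductSpace ℂ H₂] [CompleteSpace H₂]

/-- A bounded operator range of finite codimension out of a Hilbert space is closed. -/
lemma isClosed_range_of_finiteCodim
    (T : H →L[ℂ] H₂) (h : FiniteDimensional ℂ (H₂ ⧸ LinearMap.range (T : H →ₗ[ℂ] H₂))) :
    IsClosed (LinearMap.range (T : H →ₗ[ℂ] H₂) : Set H₂) := by
  classical
  obtain ⟨G, hG⟩ := (LinearMap.range (T : H →ₗ[ℂ] H₂)).exists_isCompl
  haveI : FiniteDimensional ℂ G :=
    Module.Finite.equiv (Submodule.quotientEquivOfIsCompl _ G hG)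
  set K := LinearMap.ker (T : H →ₗ[ℂ] H₂) with hK
  haveI : CompleteSpace Kᗮ := K.isClosed_orthogonal.completeSpace_coe
  haveI : CompleteSpace G := FiniteDimensional.complete ℂ G
  set W : (↥Kᗮ × ↥G) →L[ℂ] H₂ := (T.comp Kᗮ.subtypeL).coprod G.subtypeL with hW
  have hWapp : ∀ p : ↥Kᗮ × ↥G, W p = T p.1 + (p.2 : H₂) := fun p => rfl
  have hinj : LinearMap.ker (W : ↥Kᗮ × ↥G →ₗ[ℂ] H₂) = ⊥ := by
    rw [LinearMap.ker_eq_bot']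
    rintro ⟨m, g⟩ hmg
    rw [ContinuousLinearMap.coe_coe, hWapp] at hmg
    have hg : (g : H₂) ∈ LinearMap.range (T : H →ₗ[ℂ] H₂) ⊓ G := by
      constructor
      · exact ⟨-m, by simpa [map_neg, neg_eq_iff_add_eq_zero] using hmg⟩
      · exact g.2
    rw [hG.inf_eq_bot] at hg
    have hg0 : (g : H₂) = 0 := hg
    have hm : T (m : H) = 0 := by
      have := hmg
      rw [hg0, add_zero] at this
      exact this
    have hmK : (m : H) ∈ K ⊓ Kᗮ := ⟨hm, m.2⟩
    rw [Submodule.inf_orthogonal_eq_bot] at hmK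
    have : (m : H) = 0 := hmK
    ext <;> simp_all
  have hsurj : LinearMap.range (W : ↥Kᗮ × ↥G →ₗ[ℂ] H₂) = ⊤ := by
    rw [LinearMap.range_eq_top]
    intro f
    have hf : f ∈ LinearMap.range (T : H →ₗ[ℂ] H₂) ⊔ G := by rw [hG.sup_eq_top]; trivial
    obtain ⟨t, ht, g, hg, rfl⟩ := Submodule.mem_sup.mp hf
    obtain ⟨x, rfl⟩ := ht
    obtain ⟨k, hk, m, hm, rfl⟩ := K.exists_add_mem_mem_orthogonal x
    refine ⟨(⟨m, hm⟩, ⟨g, hg⟩), ?_⟩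
    rw [ContinuousLinearMap.coe_coe, hWapp]
    simp only [map_add]
    have : T k = 0 := hk
    simp [this]
  set e := ContinuousLinearEquiv.ofBijective W hinj hsurj with he
  have hrange : (LinearMap.range (T : H →ₗ[ℂ] H₂) : Set H₂) = e '' (Set.univ ×ˢ ({0} : Set ↥G)) := by
    ext f
    simp only [Set.mem_image, SetLike.mem_coe, LinearMap.mem_range]
    constructor
    · rintro ⟨x, rfl⟩
      obtain ⟨k, hk, m, hm, rfl⟩ := K.exists_add_mem_mem_orthogonal x
      refine ⟨(⟨m, hm⟩, 0), by simp, ?_⟩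
      have hex : e (⟨m, hm⟩, 0) = W (⟨m, hm⟩, 0) := rfl
      rw [hex, hWapp]
      have : T k = 0 := hk
      simp [this]
    · rintro ⟨⟨m, g⟩, hmem, rfl⟩
      have hg : g = 0 := by simpa using hmem.2
      refine ⟨m, ?_⟩
      have hex : e (m, g) = W (m, g) := rfl
      rw [hex, hWapp, hg]
      simp
  rw [hrange]
  exact (e.toHomeomorph.isClosedMap) _ (isClosed_univ.prod isClosed_singleton)


omit [CompleteSpace H₁] in
lemma exists_shear (P : H →L[ℂ] H₁) (T : H →L[ℂ] H₂)
    (hrTc : IsClosed (LinearMap.range (T : H →ₗ[ℂ] H₂) : Set H₂)) :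
    ∃ Φ : (H₁ × H₂) ≃L[ℂ] H₁ × H₂,
      Submodule.map (Φ.toLinearEquiv : (H₁ × H₂) →ₗ[ℂ] H₁ × H₂)
        ((LinearMap.range (P.comp (LinearMap.ker (T : H →ₗ[ℂ] H₂)).subtypeL : ↥(LinearMap.ker (T : H →ₗ[ℂ] H₂)) →ₗ[ℂ] H₁)).prod (LinearMap.range (T : H →ₗ[ℂ] H₂)))
        = LinearMap.range (P.prod T : H →ₗ[ℂ] H₁ × H₂) := by
  classical
  set K := LinearMap.ker (T : H →ₗ[ℂ] H₂) with hKdef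
  set rT := LinearMap.range (T : H →ₗ[ℂ] H₂) with hrTdef
  haveI : CompleteSpace Kᗮ := K.isClosed_orthogonal.completeSpace_coe
  haveI : CompleteSpace rT := hrTc.completeSpace_coe
  set f : ↥Kᗮ →L[ℂ] ↥rT :=
    (T.comp Kᗮ.subtypeL).codRestrict rT (fun x => LinearMap.mem_range_self _ _) with hfdef
  have hfapp : ∀ m : ↥Kᗮ, (f m : H₂) = T (m : H) := fun m => rfl
  have hfker : LinearMap.ker (f : ↥Kᗮ →ₗ[ℂ] ↥rT) = ⊥ := by
    rw [LinearMap.ker_eq_bot']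
    intro m hm
    have h1 : T (m : H) = 0 := by
      have := congrArg (Subtype.val) hm
      simpa [hfapp] using this
    have hmK : (m : H) ∈ K ⊓ Kᗮ := ⟨h1, m.2⟩
    rw [Submodule.inf_orthogonal_eq_bot] at hmK
    exact Subtype.ext hmK
  have hfrange : LinearMap.range (f : ↥Kᗮ →ₗ[ℂ] ↥rT) = ⊤ := by
    rw [LinearMap.range_eq_top]
    rintro ⟨z, hz⟩
    obtain ⟨x, rfl⟩ := hz
    obtain ⟨k, hk, m, hm, rfl⟩ := K.exists_add_mem_mem_orthogonal x
    refine ⟨⟨m, hm⟩, Subtype.ext ?_⟩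
    have hTk : T k = 0 := hk
    simp [hfapp, map_add, hTk]
  set e := ContinuousLinearEquiv.ofBijective f hfker hfrange with hedef
  have heapp : ∀ m : ↥Kᗮ, (e m : H₂) = T (m : H) := fun m => hfapp m
  set Rr : ↥rT →L[ℂ] H := Kᗮ.subtypeL.comp (e.symm : ↥rT →L[ℂ] ↥Kᗮ) with hRrdef
  have hTR : ∀ z : ↥rT, T (Rr z) = (z : H₂) := by
    intro z
    have : (e (e.symm z) : H₂) = T ((e.symm z : ↥Kᗮ) : H) := heapp _
    rw [e.apply_symm_apply] at this
    exact this.symm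
  set G : H₂ →L[ℂ] H₁ := (P.comp Rr).comp (orthogonalProjection rT) with hGdef
  have hG : ∀ z : ↥rT, G (z : H₂) = P (Rr z) := by
    intro z
    have : orthogonalProjection rT (z : H₂) = z := orthogonalProjection_mem_subspace_eq_self z
    simp only [hGdef, ContinuousLinearMap.comp_apply, this]
  set Φ := ContinuousLinearEquiv.equivOfInverse
      ((ContinuousLinearMap.fst ℂ H₁ H₂ + G.comp (ContinuousLinearMap.snd ℂ H₁ H₂)).prod
        (ContinuousLinearMap.snd ℂ H₁ H₂))
      ((ContinuousLinearMap.fst ℂ H₁ H₂ - G.comp (ContinuousLinearMap.snd ℂ H₁ H₂)).prod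
        (ContinuousLinearMap.snd ℂ H₁ H₂))
      (by intro x; ext <;> simp) (by intro x; ext <;> simp) with hΦdef
  have hΦapp : ∀ p : H₁ × H₂, Φ p = (p.1 + G p.2, p.2) := fun p => rfl
  refine ⟨Φ, le_antisymm ?_ ?_⟩
  · rintro w hw
    rw [Submodule.mem_map] at hw
    obtain ⟨⟨u, z⟩, hmem, rfl⟩ := hw
    obtain ⟨hu, hz⟩ := Submodule.mem_prod.mp hmem
    obtain ⟨k, rfl⟩ := hu
    set y : H := (k : H) + Rr ⟨z, hz⟩ with hydef
    refine ⟨y, ?_⟩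
    have hTk : T (k : H) = 0 := k.2
    have hTy : T y = z := by
      simp [hydef, map_add, hTk, hTR ⟨z, hz⟩]
    have hPy : P y = P (k : H) + G z := by
      have : G z = P (Rr ⟨z, hz⟩) := hG ⟨z, hz⟩
      simp [hydef, map_add, this]
    show (P.prod T) y = Φ ((P.comp K.subtypeL) k, z)
    have h1 : Φ ((P.comp K.subtypeL) k, z) = ((P.comp K.subtypeL) k + G z, z) := hΦapp _
    have happ : (P.prod T) y = (P y, T y) := rfl
    have hPk : (P.comp K.subtypeL) k = P (k : H) := rfl
    rw [h1, happ, hTy, hPk, ← hPy]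
  · rintro _ ⟨x, rfl⟩
    rw [Submodule.mem_map]
    set m : H := Rr ⟨T x, LinearMap.mem_range_self _ x⟩ with hmdef
    have hTm : T m = T x := hTR _
    have hkK : x - m ∈ K := by
      simp [hKdef, LinearMap.mem_ker, map_sub, hTm]
    refine ⟨(P (x - m), T x), ?_, ?_⟩
    · refine Submodule.mem_prod.mpr ⟨⟨⟨x - m, hkK⟩, rfl⟩, LinearMap.mem_range_self _ x⟩
    · show Φ (P (x - m), T x) = (P.prod T) x
      rw [hΦapp]
      have hGx : G (T x) = P m := by
        have := hG ⟨T x, LinearMap.mem_range_self _ x⟩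
        rw [this]
      have happ : (P.prod T) x = (P x, T x) := rfl
      rw [happ]
      ext
      · simp [hGx, map_sub]
      · rfl


/-- The kernels of `P|ker T` and of `(P, T)` agree. -/
noncomputable def kerEquivAux (P : H →L[ℂ] H₁) (T : H →L[ℂ] H₂) :
    (LinearMap.ker (P.comp (LinearMap.ker (T : H →ₗ[ℂ] H₂)).subtypeL : ↥(LinearMap.ker (T : H →ₗ[ℂ] H₂)) →ₗ[ℂ] H₁)) ≃ₗ[ℂ] LinearMap.ker (P.prod T : H →ₗ[ℂ] H₁ × H₂) where
  toFun x := ⟨((x : ↥(LinearMap.ker (T : H →ₗ[ℂ] H₂))) : H), by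
    have hT : T ((x : ↥(LinearMap.ker (T : H →ₗ[ℂ] H₂))) : H) = 0 := (x : ↥(LinearMap.ker (T : H →ₗ[ℂ] H₂))).2
    have hP : P ((x : ↥(LinearMap.ker (T : H →ₗ[ℂ] H₂))) : H) = 0 := x.2
    have : (P.prod T) ((x : ↥(LinearMap.ker (T : H →ₗ[ℂ] H₂))) : H) = (0, 0) := by
      show (P _, T _) = ((0 : H₁), (0 : H₂))
      rw [hP, hT]
    simpa [LinearMap.mem_ker] using this⟩
  map_add' _ _ := rfl
  map_smul' _ _ := rfl
  invFun y := ⟨⟨(y : H), by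
      have : (P.prod T) (y : H) = 0 := y.2
      have h2 : T (y : H) = 0 := congrArg Prod.snd this
      exact h2⟩, by
      have : (P.prod T) (y : H) = 0 := y.2
      have h1 : P (y : H) = 0 := congrArg Prod.fst this
      exact h1⟩
  left_inv _ := rfl
  right_inv _ := rfl

/-- Quotient by a product submodule. -/
noncomputable def prodQuotEquiv {A B : Type*} [AddCommGroup A] [Module ℂ A]
    [AddCommGroup B] [Module ℂ B] (p : Submodule ℂ A) (q : Submodule ℂ B) :
    ((A × B) ⧸ (p.prod q)) ≃ₗ[ℂ] (A ⧸ p) × (B ⧸ q) := by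
  have hker : LinearMap.ker (p.mkQ.prodMap q.mkQ) = p.prod q := by
    rw [LinearMap.ker_prodMap, Submodule.ker_mkQ, Submodule.ker_mkQ]
  have hsurj : Function.Surjective (p.mkQ.prodMap q.mkQ) := by
    rintro ⟨a, b⟩
    obtain ⟨a', rfl⟩ := p.mkQ_surjective a
    obtain ⟨b', rfl⟩ := q.mkQ_surjective b
    exact ⟨(a', b'), rfl⟩
  exact (Submodule.quotEquivOfEq _ _ hker.symm) ≪≫ₗ
    (p.mkQ.prodMap q.mkQ).quotKerEquivOfSurjective hsurj

end Aux

/-- A bounded operator between normed spaces is Fredholm if its kernel is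
finite-dimensional and its range is closed with finite codimension. -/
def IsFredholmOp {E F : Type*} [NormedAddCommGroup E] [NormedSpace ℂ E]
    [NormedAddCommGroup F] [NormedSpace ℂ F] (T : E →L[ℂ] F) : Prop :=
  FiniteDimensional ℂ (LinearMap.ker (T : E →ₗ[ℂ] F)) ∧
  IsClosed (LinearMap.range (T : E →ₗ[ℂ] F) : Set F) ∧
  FiniteDimensional ℂ (F ⧸ LinearMap.range (T : E →ₗ[ℂ] F))

/-- Let `H, H₁, H₂` be complex Hilbert spaces and `P : H → H₁`, `T : H → H₂` bounded
linear operators.  The column operator `(P, T) : H → H₁ ⊕ H₂`, `x ↦ (Px, Tx)`, is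
Fredholm if and only if the restriction `P|_{ker T} : ker T → H₁` is Fredholm and the
range of `T` has finite codimension in `H₂`. -/
theorem column_operator_fredholm_iff
    {H H₁ H₂ : Type*}
    [NormedAddCommGroup H] [InnerProductSpace ℂ H] [CompleteSpace H]
    [NormedAddCommGroup H₁] [InnerProductSpace ℂ H₁] [CompleteSpace H₁]
    [NormedAddCommGroup H₂] [InnerProductSpace ℂ H₂] [CompleteSpace H₂]
    (P : H →L[ℂ] H₁) (T : H →L[ℂ] H₂) :
    IsFredholmOp (P.prod T) ↔
      (IsFredholmOp (P.comp (LinearMap.ker (T : H →ₗ[ℂ] H₂)).subtypeL) ∧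
        FiniteDimensional ℂ (H₂ ⧸ LinearMap.range (T : H →ₗ[ℂ] H₂))) := by
  classical
  set rT := LinearMap.range (T : H →ₗ[ℂ] H₂) with hrTdef
  set R₀ := LinearMap.range (P.comp (LinearMap.ker (T : H →ₗ[ℂ] H₂)).subtypeL : ↥(LinearMap.ker (T : H →ₗ[ℂ] H₂)) →ₗ[ℂ] H₁) with hR₀def
  -- finite codimension of `range T` follows from Fredholmness of the column operator
  have fdT_of : FiniteDimensional ℂ ((H₁ × H₂) ⧸ LinearMap.range (P.prod T : H →ₗ[ℂ] H₁ × H₂)) →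
      FiniteDimensional ℂ (H₂ ⧸ rT) := by
    intro h
    set ψ : (H₁ × H₂) →ₗ[ℂ] H₂ ⧸ rT := rT.mkQ.comp (LinearMap.snd ℂ H₁ H₂) with hψdef
    have hle : LinearMap.range (P.prod T : H →ₗ[ℂ] H₁ × H₂) ≤ LinearMap.ker ψ := by
      rintro _ ⟨x, rfl⟩
      show rT.mkQ (T x) = 0
      rw [Submodule.mkQ_apply, Submodule.Quotient.mk_eq_zero]
      exact LinearMap.mem_range_self _ x
    refine Module.Finite.of_surjective ((LinearMap.range (P.prod T : H →ₗ[ℂ] H₁ × H₂)).liftQ ψ hle) ?_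
    intro c
    obtain ⟨b, rfl⟩ := rT.mkQ_surjective c
    exact ⟨Submodule.Quotient.mk ((0 : H₁), b), by
      rw [Submodule.liftQ_apply]; rfl⟩
  constructor
  · rintro ⟨h1, h2, h3⟩
    have fdT : FiniteDimensional ℂ (H₂ ⧸ rT) := fdT_of h3
    have hrTc : IsClosed (rT : Set H₂) := isClosed_range_of_finiteCodim T fdT
    obtain ⟨Φ, hmap⟩ := exists_shear P T hrTc
    have himg : (⇑Φ) '' ((R₀.prod rT : Submodule ℂ (H₁ × H₂)) : Set (H₁ × H₂)) =
        (LinearMap.range (P.prod T : H →ₗ[ℂ] H₁ × H₂) : Set (H₁ × H₂)) := by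
      rw [← hmap]
      exact (Submodule.map_coe _ _).symm
    refine ⟨⟨Module.Finite.equiv (kerEquivAux P T).symm, ?_, ?_⟩, fdT⟩
    · -- range of `P|ker T` is closed
      have hpc : IsClosed ((R₀.prod rT : Submodule ℂ (H₁ × H₂)) : Set (H₁ × H₂)) := by
        have hpre : ((R₀.prod rT : Submodule ℂ (H₁ × H₂)) : Set (H₁ × H₂)) =
            (⇑Φ) ⁻¹' (LinearMap.range (P.prod T : H →ₗ[ℂ] H₁ × H₂) : Set (H₁ × H₂)) := by
          rw [← himg, Set.preimage_image_eq _ Φ.injective]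
        rw [hpre]
        exact h2.preimage Φ.continuous
      have hR0set : (R₀ : Set H₁) =
          (fun a : H₁ => (a, (0 : H₂))) ⁻¹' ((R₀.prod rT : Submodule ℂ (H₁ × H₂)) : Set _) := by
        ext a
        simp [Submodule.mem_prod]
      rw [hR0set]
      exact hpc.preimage (Continuous.prodMk continuous_id continuous_const)
    · -- finite codimension of range of `P|ker T`
      have qe : ((H₁ × H₂) ⧸ LinearMap.range (P.prod T : H →ₗ[ℂ] H₁ × H₂)) ≃ₗ[ℂ] (H₁ ⧸ R₀) × (H₂ ⧸ rT) :=
        (Submodule.Quotient.equiv (R₀.prod rT) (LinearMap.range (P.prod T : H →ₗ[ℂ] H₁ × H₂))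
          Φ.toLinearEquiv hmap).symm ≪≫ₗ prodQuotEquiv R₀ rT
      haveI : FiniteDimensional ℂ ((H₁ ⧸ R₀) × (H₂ ⧸ rT)) := Module.Finite.equiv qe
      exact Module.Finite.of_surjective (LinearMap.fst ℂ (H₁ ⧸ R₀) (H₂ ⧸ rT))
        Prod.fst_surjective
  · rintro ⟨⟨h1, h2, h3⟩, fdT⟩
    have hrTc : IsClosed (rT : Set H₂) := isClosed_range_of_finiteCodim T fdT
    obtain ⟨Φ, hmap⟩ := exists_shear P T hrTc
    have himg : (⇑Φ) '' ((R₀.prod rT : Submodule ℂ (H₁ × H₂)) : Set (H₁ × H₂)) =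
        (LinearMap.range (P.prod T : H →ₗ[ℂ] H₁ × H₂) : Set (H₁ × H₂)) := by
      rw [← hmap]
      exact (Submodule.map_coe _ _).symm
    refine ⟨Module.Finite.equiv (kerEquivAux P T), ?_, ?_⟩
    · -- range of the column operator is closed
      rw [← himg]
      refine Φ.toHomeomorph.isClosedMap _ ?_
      have : ((R₀.prod rT : Submodule ℂ (H₁ × H₂)) : Set (H₁ × H₂)) =
          (R₀ : Set H₁) ×ˢ (rT : Set H₂) := rfl
      rw [this]
      exact h2.prod hrTc
    · -- finite codimension of range of the column operator
      have qe : ((H₁ × H₂) ⧸ LinearMap.range (P.prod T : H →ₗ[ℂ] H₁ × H₂)) ≃ₗ[ℂ] (H₁ ⧸ R₀) × (H₂ ⧸ rT) :=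
        (Submodule.Quotient.equiv (R₀.prod rT) (LinearMap.range (P.prod T : H →ₗ[ℂ] H₁ × H₂))
          Φ.toLinearEquiv hmap).symm ≪≫ₗ prodQuotEquiv R₀ rT
      haveI := h3
      haveI := fdT
      exact Module.Finite.equiv qe.symm
end

section
/- Conversely, given linear functionals τ₁ on the 'upper-left' algebra and τ₂ on the 'lower-right' algebra, each vanishing on commutators within its algebra, and satisfying τ₁(k∘t) = τ₂(t∘k) for all k, t, the functional τ((g,k),(t,s)) := τ₁(g) + τ₂(s) vanishes on all commutators of the block-matrix algebra. -/
/-- Multiplication of 2×2 block matrices `((g,k),(t,s))` with `g ∈ A₁`, `s ∈ A₂`,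
`k ∈ M` (an `(A₁,A₂)`-bimodule element) and `t ∈ N` (an `(A₂,A₁)`-bimodule element),
given by matrix multiplication using the bimodule actions `aM1, aM2, aN1, aN2` and the
pairings `p : M × N → A₁` (`k∘t`) and `q : N × M → A₂` (`t∘k`).  An element
`(g, k, t, s)` represents the block matrix `((g, k), (t, s))`. -/
def blockMul {A₁ A₂ M N : Type*} [Ring A₁] [Ring A₂] [Algebra ℂ A₁] [Algebra ℂ A₂]
    [AddCommGroup M] [Module ℂ M] [AddCommGroup N] [Module ℂ N]
    (p : M →ₗ[ℂ] N →ₗ[ℂ] A₁) (q : N →ₗ[ℂ] M →ₗ[ℂ] A₂)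
    (aM1 : A₁ → M → M) (aM2 : M → A₂ → M) (aN1 : N → A₁ → N) (aN2 : A₂ → N → N)
    (X Y : A₁ × M × N × A₂) : A₁ × M × N × A₂ :=
  ⟨X.1 * Y.1 + p X.2.1 Y.2.2.1,
   aM1 X.1 Y.2.1 + aM2 X.2.1 Y.2.2.2,
   aN1 X.2.2.1 Y.1 + aN2 X.2.2.2 Y.2.2.1,
   q X.2.2.1 Y.2.1 + X.2.2.2 * Y.2.2.2⟩

/-- Given linear functionals `τ₁` on the upper-left algebra `A₁` and `τ₂` on the
lower-right algebra `A₂`, each vanishing on commutators within its algebra, and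
satisfying the compatibility condition `τ₁(k∘t) = τ₂(t∘k)` for all `k, t`, the
functional `τ((g,k),(t,s)) := τ₁(g) + τ₂(s)` vanishes on all commutators of the
block-matrix algebra. -/
theorem compatible_traces_give_block_trace
    {A₁ A₂ M N : Type*} [Ring A₁] [Ring A₂] [Algebra ℂ A₁] [Algebra ℂ A₂]
    [AddCommGroup M] [Module ℂ M] [AddCommGroup N] [Module ℂ N]
    (p : M →ₗ[ℂ] N →ₗ[ℂ] A₁) (q : N →ₗ[ℂ] M →ₗ[ℂ] A₂)
    (aM1 : A₁ → M → M) (aM2 : M → A₂ → M) (aN1 : N → A₁ → N) (aN2 : A₂ → N → N)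
    (τ₁ : A₁ →ₗ[ℂ] ℂ) (τ₂ : A₂ →ₗ[ℂ] ℂ)
    (h₁ : ∀ x y : A₁, τ₁ (x * y - y * x) = 0)
    (h₂ : ∀ x y : A₂, τ₂ (x * y - y * x) = 0)
    (hcompat : ∀ (k : M) (t : N), τ₁ (p k t) = τ₂ (q t k)) :
    ∀ X Y : A₁ × M × N × A₂,
      (fun Z : A₁ × M × N × A₂ => τ₁ Z.1 + τ₂ Z.2.2.2)
        (blockMul p q aM1 aM2 aN1 aN2 X Y - blockMul p q aM1 aM2 aN1 aN2 Y X) = 0 := by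
  intro X Y
  simp only [blockMul, Prod.mk_sub_mk, map_sub, map_add]
  have e1 := h₁ X.1 Y.1
  have e2 := h₂ X.2.2.2 Y.2.2.2
  have c1 := hcompat X.2.1 Y.2.2.1
  have c2 := hcompat Y.2.1 X.2.2.1
  simp only [map_sub, map_mul] at e1 e2
  linear_combination e1 + e2 + c1 - c2
end
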